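/- arXiv:1309.0865 — 3 statements merged into one kernel-verified Lean document; each statement's English description precedes it below -/
import Mathlib

section
/- For any word \underline{w} = s₁⋯s_m in S, ε(\underline{H}_{s₁}⋯\underline{H}_{s_m}) = Σ v^{d(e)}, where the sum runs over all 01-sequences e of length m whose associated subsequence expresses the identity element of W. -/
/-!
Right multiplication by `H̲_s = H_s + v` sends `H_w` to `H_{ws} + v^{±1} H_w`, the sign being `+`
exactly when `ws > w` (for `ws < w` the quadratic relation turns `v⁻¹ - v` plus `v` into `v⁻¹`).
Expanding `H̲_{s₁}⋯H̲_{s_m}` factor by factor therefore gives `Σ_e v^{d(e)} H_{x_m(e)}`: the digit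
`e_i = 1` takes the `H_{ws}` branch, `e_i = 0` the scalar branch, which contributes exactly the
`i`-th summand of the defect. The trace keeps the terms with `x_m(e) = 1`.
-/

open LaurentPolynomial
open scoped Classical

/-- The Bruhat stroll associated to a word `s₁⋯s_m` and a 01-sequence `e`:
`x_i = s₁^{e₁}⋯s_i^{e_i}`. -/
def stroll {B W : Type*} [Group W] {M : CoxeterMatrix B} (cs : CoxeterSystem M W)
    {m : ℕ} (s : Fin m → B) (e : Fin m → Bool) (i : ℕ) : W :=
  ((List.ofFn (fun j : Fin m => if e j then cs.simple (s j) else 1)).take i).prod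

/-- The defect of a 01-sequence `e`. -/
noncomputable def defect {B W : Type*} [Group W] {M : CoxeterMatrix B}
    (cs : CoxeterSystem M W) {m : ℕ} (s : Fin m → B) (e : Fin m → Bool) : ℤ :=
  ∑ i : Fin m, if e i then 0 else
    (if cs.length (stroll cs s e i.val * cs.simple (s i)) > cs.length (stroll cs s e i.val)
      then 1 else -1)

section Stroll

variable {B W : Type*} [Group W] {M : CoxeterMatrix B} (cs : CoxeterSystem M W)

theorem stroll_snoc_of_le {m : ℕ} (s : Fin (m + 1) → B) (e : Fin m → Bool) (c : Bool) {i : ℕ}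
    (hi : i ≤ m) : stroll cs s (Fin.snoc e c) i = stroll cs (Fin.init s) e i := by
  unfold stroll
  rw [List.ofFn_succ', List.concat_eq_append, List.take_append_of_le_length (by simpa using hi)]
  simp [Fin.init]

theorem stroll_snoc_last {m : ℕ} (s : Fin (m + 1) → B) (e : Fin m → Bool) (c : Bool) :
    stroll cs s (Fin.snoc e c) (m + 1) =
      stroll cs (Fin.init s) e m * (if c then cs.simple (s (Fin.last m)) else 1) := by
  unfold stroll
  rw [List.ofFn_succ', List.concat_eq_append, List.take_of_length_le (by simp),
    List.take_of_length_le (by simp)]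
  simp [Fin.init]

theorem defect_snoc {m : ℕ} (s : Fin (m + 1) → B) (e : Fin m → Bool) (c : Bool) :
    defect cs s (Fin.snoc e c) = defect cs (Fin.init s) e +
      if c then 0 else
        if cs.length (stroll cs (Fin.init s) e m * cs.simple (s (Fin.last m))) >
            cs.length (stroll cs (Fin.init s) e m) then 1 else -1 := by
  unfold defect
  rw [Fin.sum_univ_castSucc]
  simp only [Fin.snoc_castSucc, Fin.snoc_last, Fin.val_castSucc, Fin.val_last,
    stroll_snoc_of_le cs s e c le_rfl, stroll_snoc_of_le cs s e c (Fin.is_lt _).le]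
  rfl

end Stroll

theorem Fin.sum_pi_succ_eq_sum_snoc {m : ℕ} {β N : Type*} [Fintype β] [AddCommMonoid N]
    (f : (Fin (m + 1) → β) → N) : ∑ e, f e = ∑ e : Fin m → β, ∑ c, f (Fin.snoc e c) := by
  rw [← (Fin.snocEquiv fun _ => β).sum_comp, Fintype.sum_prod_type, Finset.sum_comm]
  rfl

section HeckeBasis

variable {B W : Type*} [Group W] {M : CoxeterMatrix B} (cs : CoxeterSystem M W)
  {A : Type*} [Ring A] [Algebra (LaurentPolynomial ℤ) A]
  (b : Module.Basis W (LaurentPolynomial ℤ) A)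

theorem basis_mul_simple_add_T_one
    (hmul_gt : ∀ (w : W) (i : B), cs.length (w * cs.simple i) > cs.length w →
      b w * b (cs.simple i) = b (w * cs.simple i))
    (hmul_lt : ∀ (w : W) (i : B), cs.length (w * cs.simple i) < cs.length w →
      b w * b (cs.simple i) = b (w * cs.simple i) +
        algebraMap (LaurentPolynomial ℤ) A (T (-1) - T 1) * b w)
    (w : W) (i : B) :
    b w * (b (cs.simple i) + algebraMap (LaurentPolynomial ℤ) A (T 1)) =
      b (w * cs.simple i) +
        (T (if cs.length (w * cs.simple i) > cs.length w then 1 else -1) : LaurentPolynomial ℤ) •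
          b w := by
  rw [mul_add, ← Algebra.commutes (T 1 : LaurentPolynomial ℤ), ← Algebra.smul_def]
  rcases cs.length_mul_simple w i with h | h
  · have hgt : cs.length (w * cs.simple i) > cs.length w := by omega
    rw [if_pos hgt, hmul_gt w i hgt]
  · have hlt : cs.length (w * cs.simple i) < cs.length w := by omega
    rw [if_neg (by omega), hmul_lt w i hlt, ← Algebra.smul_def, add_assoc, ← add_smul,
      sub_add_cancel]

theorem prod_simple_add_T_one_eq_sum_defect_smul_stroll
    (hb1 : b 1 = 1)
    (hmul_gt : ∀ (w : W) (i : B), cs.length (w * cs.simple i) > cs.length w →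
      b w * b (cs.simple i) = b (w * cs.simple i))
    (hmul_lt : ∀ (w : W) (i : B), cs.length (w * cs.simple i) < cs.length w →
      b w * b (cs.simple i) = b (w * cs.simple i) +
        algebraMap (LaurentPolynomial ℤ) A (T (-1) - T 1) * b w)
    {m : ℕ} (s : Fin m → B) :
    (List.ofFn (fun i : Fin m =>
        b (cs.simple (s i)) + algebraMap (LaurentPolynomial ℤ) A (T 1))).prod =
      ∑ e : Fin m → Bool, (T (defect cs s e) : LaurentPolynomial ℤ) • b (stroll cs s e m) := by
  induction m with
  | zero => simp [stroll, defect, hb1]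
  | succ m ih =>
    rw [List.ofFn_succ', List.concat_eq_append, List.prod_append, List.prod_singleton,
      Fin.sum_pi_succ_eq_sum_snoc]
    have ih' := ih (Fin.init s)
    simp only [Fin.init] at ih'
    rw [ih', Finset.sum_mul]
    refine Finset.sum_congr rfl fun e _ => ?_
    rw [Fintype.sum_bool, stroll_snoc_last, stroll_snoc_last, defect_snoc, defect_snoc,
      smul_mul_assoc, basis_mul_simple_add_T_one cs b hmul_gt hmul_lt]
    simp only [if_true, Bool.false_eq_true, if_false, add_zero, mul_one, smul_add, smul_smul,
      ← T_add]

end HeckeBasis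

/-- For any word `s₁⋯s_m` in `S`,
`ε(H̲_{s₁}⋯H̲_{s_m}) = Σ v^{d(e)}`, where the sum runs over all 01-sequences `e` of
length `m` whose associated subsequence expresses the identity element of `W`, and `ε`
is the standard trace (coefficient of `H_e`). -/
theorem trace_defect_formula {B W : Type*} [Group W] {M : CoxeterMatrix B}
    (cs : CoxeterSystem M W)
    (A : Type*) [Ring A] [Algebra (LaurentPolynomial ℤ) A]
    (b : Module.Basis W (LaurentPolynomial ℤ) A) (hb1 : b 1 = 1)
    (hmul_gt : ∀ (w : W) (i : B), cs.length (w * cs.simple i) > cs.length w →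
      b w * b (cs.simple i) = b (w * cs.simple i))
    (hmul_lt : ∀ (w : W) (i : B), cs.length (w * cs.simple i) < cs.length w →
      b w * b (cs.simple i) = b (w * cs.simple i) +
        algebraMap (LaurentPolynomial ℤ) A (T (-1) - T 1) * b w)
    (m : ℕ) (s : Fin m → B) :
    b.repr ((List.ofFn (fun i : Fin m =>
        b (cs.simple (s i)) + algebraMap (LaurentPolynomial ℤ) A (T 1))).prod) 1 =
      ∑ e : Fin m → Bool, if stroll cs s e m = 1 then T (defect cs s e) else 0 := by
  rw [prod_simple_add_T_one_eq_sum_defect_smul_stroll cs b hb1 hmul_gt hmul_lt, map_sum, Finset.sum_apply']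
  refine Finset.sum_congr rfl fun e _ => ?_
  simp [Finsupp.single_apply]
end

section
/- The Demazure operator ∂_s(f) = (f - s(f))/α_s is a well-defined map R → R^s, and its kernel is exactly R^s. -/
open MvPolynomial

/-- The linear polynomial in `R = Sym(𝔥*)` corresponding to the element of `𝔥*`
with coordinates `φ` (identifying `𝔥` with `Fin n → k` so that `𝔥*` has dual basis
corresponding to the variables `X i`). -/
noncomputable def lin {k : Type*} [CommRing k] {n : ℕ} (φ : Fin n → k) :
    MvPolynomial (Fin n) k :=
  ∑ i, C (φ i) * X i

/-- The reflection `s` acting on `R = Sym(𝔥*)`, induced by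
`s(γ) = γ - ⟨α^∨, γ⟩·α` on `𝔥*`, where `α^∨ ∈ 𝔥` has coordinates `αv` and
`α ∈ 𝔥*` has coordinates `α`. -/
noncomputable def sRefl {k : Type*} [CommRing k] {n : ℕ} (αv α : Fin n → k) :
    MvPolynomial (Fin n) k →ₐ[k] MvPolynomial (Fin n) k :=
  aeval (fun i => X i - C (αv i) * lin α)

section aux
variable {k : Type*} [CommRing k] {n : ℕ}

lemma lin_zero : lin (0 : Fin n → k) = 0 := by simp [lin]

lemma sRefl_zero (αv : Fin n → k) (f : MvPolynomial (Fin n) k) :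
    sRefl αv (0 : Fin n → k) f = f := by
  have : sRefl αv (0 : Fin n → k) = aeval X := by
    unfold sRefl; congr 1; funext i; simp [lin_zero]
  rw [this, aeval_X_left_apply]

lemma lin_ne_zero {α : Fin n → k} (hα : α ≠ 0) : lin α ≠ 0 := by
  obtain ⟨j, hj⟩ : ∃ j, α j ≠ 0 := by
    by_contra h; push_neg at h; exact hα (funext h)
  intro h0
  have := congrArg (eval (Pi.single j (1 : k))) h0
  simp [lin, eval_sum, Pi.single_apply, mul_ite, Finset.sum_ite_eq'] at this
  exact hj this

lemma dvd_key (αv α : Fin n → k) (f : MvPolynomial (Fin n) k) :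
    lin α ∣ f - sRefl αv α f := by
  rw [← Ideal.mem_span_singleton, ← Ideal.Quotient.eq_zero_iff_mem, map_sub, sub_eq_zero]
  set I := Ideal.span {lin α}
  have hmem : lin α ∈ I := Ideal.subset_span rfl
  have h1 : (Ideal.Quotient.mkₐ k I).comp (sRefl αv α)
      = (Ideal.Quotient.mkₐ k I).comp (aeval X) := by
    rw [sRefl, comp_aeval, comp_aeval]
    congr 1
    funext i
    simp [Ideal.Quotient.eq_zero_iff_mem.mpr hmem]
  have := congrArg (fun φ => φ f) h1
  simpa [aeval_X_left_apply] using this.symm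

lemma sRefl_lin (αv α : Fin n → k) (hpair : ∑ i, αv i * α i = 2) :
    sRefl αv α (lin α) = - lin α := by
  have h : sRefl αv α (lin α) = ∑ i, C (α i) * (X i - C (αv i) * lin α) := by
    simp [sRefl, lin, map_sum]
  rw [h]
  have h2 : ∑ i, C (α i) * (X i - C (αv i) * lin α)
      = lin α - C (∑ i, αv i * α i) * lin α := by
    rw [map_sum, Finset.sum_mul, lin, ← Finset.sum_sub_distrib]
    apply Finset.sum_congr rfl
    intro i _
    rw [map_mul]
    ring
  rw [h2, hpair, map_ofNat]
  ring

lemma sRefl_sRefl (αv α : Fin n → k) (hpair : ∑ i, αv i * α i = 2)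
    (f : MvPolynomial (Fin n) k) : sRefl αv α (sRefl αv α f) = f := by
  have h : (sRefl αv α).comp (sRefl αv α) = AlgHom.id k _ := by
    apply algHom_ext
    intro i
    have h1 : sRefl αv α (X i) = X i - C (αv i) * lin α := by simp [sRefl]
    rw [AlgHom.comp_apply, h1, map_sub, map_mul, h1, sRefl_lin αv α hpair]
    have h2 : sRefl αv α (C (αv i)) = C (αv i) := by
      simp [sRefl, algebraMap_eq]
    rw [h2, AlgHom.id_apply]
    ring
  have := congrArg (fun φ => φ f) h
  simpa using this

end aux

/-- The Demazure operator `∂_s(f) = (f - s(f))/α_s` is a well-defined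
(`k`-linear) map `R → R^s`, and its kernel is exactly `R^s`. -/
theorem demazure_well_defined {k : Type*} [CommRing k] [IsDomain k] {n : ℕ}
    (αv α : Fin n → k) (hpair : ∑ i, αv i * α i = 2)
    (hDS : ∃ δ : Fin n → k, ∑ i, αv i * δ i = 1) :
    ∃ D : MvPolynomial (Fin n) k →ₗ[k] MvPolynomial (Fin n) k,
      (∀ f, lin α * D f = f - sRefl αv α f) ∧
      (∀ f, sRefl αv α (D f) = D f) ∧
      (∀ f, D f = 0 ↔ sRefl αv α f = f) := by
  by_cases hα : α = 0
  · subst hα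
    exact ⟨0, fun f => by simp [lin_zero, sRefl_zero],
      fun f => by simp [sRefl_zero],
      fun f => by simp [sRefl_zero]⟩
  · have hlin : lin α ≠ 0 := lin_ne_zero hα
    have hdvd : ∀ f : MvPolynomial (Fin n) k,
        ∃ g, lin α * g = f - sRefl αv α f := by
      intro f
      obtain ⟨g, hg⟩ := dvd_key αv α f
      exact ⟨g, hg.symm⟩
    choose D hD using hdvd
    have hu : ∀ f g, lin α * g = f - sRefl αv α f → g = D f := by
      intro f g hg
      exact mul_left_cancel₀ hlin (by rw [hg, hD])
    refine ⟨{ toFun := D, map_add' := ?_, map_smul' := ?_ }, fun f => hD f, ?_, ?_⟩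
    · intro x y
      refine (hu _ _ ?_).symm
      rw [mul_add, hD, hD, map_add]
      ring
    · intro c x
      refine (hu _ _ ?_).symm
      rw [RingHom.id_apply, mul_smul_comm, hD, map_smul, smul_sub]
    · intro f
      simp only [LinearMap.coe_mk, AddHom.coe_mk]
      have h1 : sRefl αv α (lin α * D f) = sRefl αv α f - f := by
        rw [hD, map_sub, sRefl_sRefl αv α hpair]
      rw [map_mul, sRefl_lin αv α hpair] at h1
      apply mul_left_cancel₀ hlin
      have : lin α * sRefl αv α (D f) = f - sRefl αv α f := by
        have := congrArg Neg.neg h1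
        rw [neg_mul, neg_neg, neg_sub] at this
        exact this
      rw [this, hD]
    · intro f
      simp only [LinearMap.coe_mk, AddHom.coe_mk]
      constructor
      · intro h0
        have := hD f
        rw [h0, mul_zero] at this
        exact (sub_eq_zero.mp this.symm).symm
      · intro hf
        exact (hu f 0 (by rw [mul_zero, hf, sub_self])).symm
end

section
/- There is a short exact sequence of R-bimodules 0 → R_s → B_s → R → 0, where R_s → B_s sends 1 to δ ⊗ 1 − 1 ⊗ δ and B_s → R is the multiplication map f ⊗ g ↦ fg. Here R_s denotes R with right action twisted by s. -/
open MvPolynomial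

noncomputable def invSub {k : Type*} [CommRing k] {n : ℕ} (αv α : Fin n → k) :
    Subalgebra k (MvPolynomial (Fin n) k) :=
  AlgHom.equalizer (sRefl αv α) (AlgHom.id k (MvPolynomial (Fin n) k))

open scoped TensorProduct

set_option maxHeartbeats 1000000
set_option synthInstance.maxHeartbeats 400000
set_option linter.unusedSectionVars false

namespace SESaux

variable {k : Type*} [CommRing k] {n : ℕ} (αv α : Fin n → k)

lemma sRefl_X (i : Fin n) : sRefl αv α (X i) = X i - C (αv i) * lin α := by
  simp [sRefl]

lemma sRefl_lin (φ : Fin n → k) :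
    sRefl αv α (lin φ) = lin φ - C (∑ i, αv i * φ i) * lin α := by
  have h : sRefl αv α (lin φ) = ∑ i, C (φ i) * (X i - C (αv i) * lin α) := by
    simp only [lin, map_sum, map_mul, sRefl, aeval_C, aeval_X, algebraMap_eq]
  have h2 : ∀ i : Fin n, C (φ i) * (X i - C (αv i) * lin α)
      = C (φ i) * X i - C (αv i * φ i) * lin α := by
    intro i; rw [C_mul]; ring
  rw [h, Finset.sum_congr rfl fun i _ => h2 i, Finset.sum_sub_distrib,
    ← Finset.sum_mul, ← map_sum, ← lin]

lemma eval_lin (v φ : Fin n → k) : eval v (lin φ) = ∑ i, φ i * v i := by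
  simp [lin]

lemma lin_ne_zero [Nontrivial k] (hDS2 : ∃ v : Fin n → k, ∑ i, α i * v i = 1) :
    lin α ≠ 0 := by
  obtain ⟨v, hv⟩ := hDS2
  intro h
  have := eval_lin v α
  rw [h, hv, map_zero] at this
  exact one_ne_zero this.symm

section invol
variable (hpair : ∑ i, αv i * α i = 2)
include hpair

lemma sRefl_alpha : sRefl αv α (lin α) = - lin α := by
  rw [sRefl_lin, hpair]; rw [map_ofNat]; ring

lemma sRefl_invol (f : MvPolynomial (Fin n) k) :
    sRefl αv α (sRefl αv α f) = f := by
  have : (sRefl αv α).comp (sRefl αv α) = AlgHom.id k (MvPolynomial (Fin n) k) := by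
    apply MvPolynomial.algHom_ext
    intro i
    simp only [AlgHom.comp_apply, sRefl_X, map_sub, map_mul, sRefl_alpha αv α hpair,
      AlgHom.id_apply]
    rw [show sRefl αv α (C (αv i)) = C (αv i) by simp [sRefl]]
    ring
  exact DFunLike.congr_fun this f

end invol

lemma dvd_sub_sRefl (f : MvPolynomial (Fin n) k) : lin α ∣ f - sRefl αv α f := by
  induction f using MvPolynomial.induction_on with
  | C a => simp [sRefl]
  | add p q hp hq =>
      have := dvd_add hp hq
      rw [map_add] at *
      convert this using 1
      ring
  | mul_X p i hp =>
      rw [map_mul, sRefl_X]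
      have h : p * X i - sRefl αv α p * (X i - C (αv i) * lin α)
          = (p - sRefl αv α p) * X i + lin α * (sRefl αv α p * C (αv i)) := by ring
      rw [h]
      exact dvd_add (hp.mul_right _) (Dvd.intro _ rfl)

/-- The Demazure operator. -/
noncomputable def dem (f : MvPolynomial (Fin n) k) : MvPolynomial (Fin n) k :=
  (exists_eq_mul_right_of_dvd (dvd_sub_sRefl αv α f)).choose

lemma dem_spec (f : MvPolynomial (Fin n) k) :
    f - sRefl αv α f = lin α * dem αv α f :=
  (exists_eq_mul_right_of_dvd (dvd_sub_sRefl αv α f)).choose_spec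

section domain

variable [IsDomain k] (hpair : ∑ i, αv i * α i = 2)
  (hDS2 : ∃ v : Fin n → k, ∑ i, α i * v i = 1)
include hDS2

lemma dem_eq (f q : MvPolynomial (Fin n) k)
    (h : f - sRefl αv α f = lin α * q) : dem αv α f = q :=
  mul_left_cancel₀ (lin_ne_zero α hDS2) ((dem_spec αv α f).symm.trans h)

lemma dem_add (f g : MvPolynomial (Fin n) k) :
    dem αv α (f + g) = dem αv α f + dem αv α g := by
  refine dem_eq αv α hDS2 _ _ ?_
  rw [map_add, mul_add, ← dem_spec, ← dem_spec]
  ring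

lemma dem_mulA (c f : MvPolynomial (Fin n) k) (hc : sRefl αv α c = c) :
    dem αv α (c * f) = c * dem αv α f := by
  refine dem_eq αv α hDS2 _ _ ?_
  rw [map_mul, hc]
  have := dem_spec αv α f
  linear_combination c * this

lemma dem_one : dem αv α (1 : MvPolynomial (Fin n) k) = 0 := by
  refine dem_eq αv α hDS2 _ _ ?_
  rw [map_one]; ring

include hpair in
lemma sRefl_dem (f : MvPolynomial (Fin n) k) :
    sRefl αv α (dem αv α f) = dem αv α f := by
  have h1 := dem_spec αv α f
  have h2 := congrArg (sRefl αv α) h1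
  rw [map_sub, sRefl_invol αv α hpair, map_mul, sRefl_alpha αv α hpair] at h2
  have h3 : lin α * sRefl αv α (dem αv α f) = lin α * dem αv α f := by
    linear_combination h1 + h2
  exact mul_left_cancel₀ (lin_ne_zero α hDS2) h3

end domain

section domain2

variable [IsDomain k] (δ : Fin n → k)

lemma sRefl_delta (hδ : ∑ i, αv i * δ i = 1) :
    sRefl αv α (lin δ) = lin δ - lin α := by
  rw [sRefl_lin, hδ, map_one, one_mul]

variable (hpair : ∑ i, αv i * α i = 2) (hδ : ∑ i, αv i * δ i = 1)
  (hDS2 : ∃ v : Fin n → k, ∑ i, α i * v i = 1)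
include hδ hDS2

lemma dem_delta : dem αv α (lin δ) = 1 := by
  refine dem_eq αv α hDS2 _ _ ?_
  rw [sRefl_delta αv α δ hδ]; ring

end domain2

/-- The invariant part of `f` in the decomposition `f = aPart f + dem f * δ`. -/
noncomputable def aPart (δ : Fin n → k) (f : MvPolynomial (Fin n) k) :
    MvPolynomial (Fin n) k :=
  f - dem αv α f * lin δ

section domain3

variable [IsDomain k] (δ : Fin n → k)
  (hpair : ∑ i, αv i * α i = 2) (hδ : ∑ i, αv i * δ i = 1)
  (hDS2 : ∃ v : Fin n → k, ∑ i, α i * v i = 1)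

lemma aPart_spec (f : MvPolynomial (Fin n) k) :
    f = aPart αv α δ f + dem αv α f * lin δ := by
  unfold aPart; ring

include hDS2 in
lemma aPart_add (f g : MvPolynomial (Fin n) k) :
    aPart αv α δ (f + g) = aPart αv α δ f + aPart αv α δ g := by
  unfold aPart
  rw [dem_add αv α hDS2]
  ring

include hDS2 in
lemma aPart_mulA (c f : MvPolynomial (Fin n) k) (hc : sRefl αv α c = c) :
    aPart αv α δ (c * f) = c * aPart αv α δ f := by
  unfold aPart
  rw [dem_mulA αv α hDS2 c f hc]
  ring

include hpair hδ hDS2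

lemma sRefl_aPart (f : MvPolynomial (Fin n) k) :
    sRefl αv α (aPart αv α δ f) = aPart αv α δ f := by
  unfold aPart
  rw [map_sub, map_mul, sRefl_dem αv α hpair hDS2, sRefl_delta αv α δ hδ]
  have h1 := dem_spec αv α f
  linear_combination - h1

lemma dem_mem (f : MvPolynomial (Fin n) k) : dem αv α f ∈ invSub αv α := by
  rw [invSub, AlgHom.mem_equalizer, AlgHom.id_apply]
  exact sRefl_dem αv α hpair hDS2 f

lemma aPart_mem (f : MvPolynomial (Fin n) k) : aPart αv α δ f ∈ invSub αv α := by
  rw [invSub, AlgHom.mem_equalizer, AlgHom.id_apply]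
  exact sRefl_aPart αv α δ hpair hδ hDS2 f

lemma cMem : lin δ * (lin δ - lin α) ∈ invSub αv α := by
  rw [invSub, AlgHom.mem_equalizer, AlgHom.id_apply]
  rw [map_mul, map_sub, sRefl_delta αv α δ hδ, sRefl_alpha αv α hpair]
  ring

lemma dMem : 2 * lin δ - lin α ∈ invSub αv α := by
  rw [invSub, AlgHom.mem_equalizer, AlgHom.id_apply]
  rw [map_sub, map_mul, map_ofNat, sRefl_delta αv α δ hδ, sRefl_alpha αv α hpair]
  ring

end domain3

lemma move (c x y : MvPolynomial (Fin n) k) (hc : c ∈ invSub αv α) :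
    (x * c) ⊗ₜ[↥(invSub αv α)] y = x ⊗ₜ[↥(invSub αv α)] (c * y) := by
  have h1 : x * c = (⟨c, hc⟩ : ↥(invSub αv α)) • x := by
    rw [Subalgebra.smul_def, smul_eq_mul, mul_comm]
  have h2 : c * y = (⟨c, hc⟩ : ↥(invSub αv α)) • y := by
    rw [Subalgebra.smul_def, smul_eq_mul]
  rw [h1, h2, TensorProduct.smul_tmul]

/-- The coordinates map `B_s → R × R`. -/
noncomputable def Tmap [IsDomain k] (δ : Fin n → k)
    (hDS2 : ∃ v : Fin n → k, ∑ i, α i * v i = 1) :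
    (MvPolynomial (Fin n) k ⊗[↥(invSub αv α)] MvPolynomial (Fin n) k) →ₗ[↥(invSub αv α)]
      MvPolynomial (Fin n) k × MvPolynomial (Fin n) k :=
  TensorProduct.lift <| LinearMap.mk₂ (↥(invSub αv α))
    (fun f g => (f * aPart αv α δ g, f * dem αv α g))
    (fun f₁ f₂ g => by
      rw [Prod.mk_add_mk]
      simp only [Prod.mk.injEq]
      constructor <;> ring)
    (fun c f g => by
      rw [Prod.smul_mk]
      simp only [Subalgebra.smul_def, smul_eq_mul, Prod.mk.injEq]
      constructor <;> ring)
    (fun f g₁ g₂ => by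
      rw [Prod.mk_add_mk]
      rw [aPart_add αv α δ hDS2, dem_add αv α hDS2]
      simp only [Prod.mk.injEq]
      constructor <;> ring)
    (fun c f g => by
      rw [Prod.smul_mk]
      have hc : sRefl αv α (c : MvPolynomial (Fin n) k) = c := c.2
      simp only [Subalgebra.smul_def, smul_eq_mul, Prod.mk.injEq]
      rw [aPart_mulA αv α δ hDS2 _ _ hc, dem_mulA αv α hDS2 _ _ hc]
      constructor <;> ring)

lemma Tmap_tmul [IsDomain k] (δ : Fin n → k)
    (hDS2 : ∃ v : Fin n → k, ∑ i, α i * v i = 1)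
    (f g : MvPolynomial (Fin n) k) :
    Tmap αv α δ hDS2 (f ⊗ₜ[↥(invSub αv α)] g)
      = (f * aPart αv α δ g, f * dem αv α g) := rfl

lemma coords [IsDomain k] (δ : Fin n → k)
    (hpair : ∑ i, αv i * α i = 2) (hδ : ∑ i, αv i * δ i = 1)
    (hDS2 : ∃ v : Fin n → k, ∑ i, α i * v i = 1)
    (x : MvPolynomial (Fin n) k ⊗[↥(invSub αv α)] MvPolynomial (Fin n) k) :
    x = (Tmap αv α δ hDS2 x).1 ⊗ₜ[↥(invSub αv α)] 1
      + (Tmap αv α δ hDS2 x).2 ⊗ₜ[↥(invSub αv α)] lin δ := by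
  induction x using TensorProduct.induction_on with
  | zero => simp
  | tmul f g =>
      rw [Tmap_tmul, move αv α _ _ _ (aPart_mem αv α δ hpair hδ hDS2 g),
        move αv α _ _ _ (dem_mem αv α δ hpair hδ hDS2 g), mul_one,
        ← TensorProduct.tmul_add, ← aPart_spec]
  | add x y hx hy =>
      rw [map_add]
      conv_lhs => rw [hx, hy]
      simp only [Prod.fst_add, Prod.snd_add, TensorProduct.add_tmul]
      abel

section Elem

variable [IsDomain k] (δ : Fin n → k)
  (hpair : ∑ i, αv i * α i = 2) (hδ : ∑ i, αv i * δ i = 1)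
  (hDS2 : ∃ v : Fin n → k, ∑ i, α i * v i = 1)

include hpair hδ hDS2

lemma Edelta :
    ((lin δ - lin α) ⊗ₜ[↥(invSub αv α)] (1 : MvPolynomial (Fin n) k)) *
      (lin δ ⊗ₜ[↥(invSub αv α)] 1 - 1 ⊗ₜ[↥(invSub αv α)] lin δ)
    = (lin δ ⊗ₜ[↥(invSub αv α)] 1 - 1 ⊗ₜ[↥(invSub αv α)] lin δ) *
        ((1 : MvPolynomial (Fin n) k) ⊗ₜ[↥(invSub αv α)] lin δ) := by
  have h1 : ((lin δ - lin α) * lin δ) ⊗ₜ[↥(invSub αv α)] (1 : MvPolynomial (Fin n) k)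
      = (1 : MvPolynomial (Fin n) k) ⊗ₜ[↥(invSub αv α)] (lin δ * (lin δ - lin α)) := by
    rw [show (lin δ - lin α) * lin δ = 1 * (lin δ * (lin δ - lin α)) by ring,
      move αv α _ _ _ (cMem αv α δ hpair hδ hDS2), mul_one]
  have h2 : (lin δ - lin α) ⊗ₜ[↥(invSub αv α)] lin δ
      = (1 : MvPolynomial (Fin n) k) ⊗ₜ[↥(invSub αv α)] ((2 * lin δ - lin α) * lin δ)
        - lin δ ⊗ₜ[↥(invSub αv α)] lin δ := by
    rw [show lin δ - lin α = 1 * (2 * lin δ - lin α) - lin δ by ring,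
      TensorProduct.sub_tmul, move αv α _ _ _ (dMem αv α δ hpair hδ hDS2)]
  have h3 : (1 : MvPolynomial (Fin n) k) ⊗ₜ[↥(invSub αv α)] (lin δ * (lin δ - lin α))
      - (1 : MvPolynomial (Fin n) k) ⊗ₜ[↥(invSub αv α)] ((2 * lin δ - lin α) * lin δ)
      = -((1 : MvPolynomial (Fin n) k) ⊗ₜ[↥(invSub αv α)] (lin δ * lin δ)) := by
    rw [← TensorProduct.tmul_sub,
      show lin δ * (lin δ - lin α) - (2 * lin δ - lin α) * lin δ = -(lin δ * lin δ) by ring,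
      TensorProduct.tmul_neg]
  have p1 : ((lin δ - lin α) ⊗ₜ[↥(invSub αv α)] (1 : MvPolynomial (Fin n) k)) *
      (lin δ ⊗ₜ[↥(invSub αv α)] 1)
      = ((lin δ - lin α) * lin δ) ⊗ₜ[↥(invSub αv α)] (1 : MvPolynomial (Fin n) k) := by
    rw [Algebra.TensorProduct.tmul_mul_tmul, one_mul]
  have p2 : ((lin δ - lin α) ⊗ₜ[↥(invSub αv α)] (1 : MvPolynomial (Fin n) k)) *
      ((1 : MvPolynomial (Fin n) k) ⊗ₜ[↥(invSub αv α)] lin δ)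
      = (lin δ - lin α) ⊗ₜ[↥(invSub αv α)] lin δ := by
    rw [Algebra.TensorProduct.tmul_mul_tmul, mul_one, one_mul]
  have p3 : (lin δ ⊗ₜ[↥(invSub αv α)] (1 : MvPolynomial (Fin n) k)) *
      ((1 : MvPolynomial (Fin n) k) ⊗ₜ[↥(invSub αv α)] lin δ)
      = lin δ ⊗ₜ[↥(invSub αv α)] lin δ := by
    rw [Algebra.TensorProduct.tmul_mul_tmul, mul_one, one_mul]
  have p4 : ((1 : MvPolynomial (Fin n) k) ⊗ₜ[↥(invSub αv α)] lin δ) *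
      ((1 : MvPolynomial (Fin n) k) ⊗ₜ[↥(invSub αv α)] lin δ)
      = (1 : MvPolynomial (Fin n) k) ⊗ₜ[↥(invSub αv α)] (lin δ * lin δ) := by
    rw [Algebra.TensorProduct.tmul_mul_tmul, mul_one]
  linear_combination p1 - p2 - p3 + p4 + h1 - h2 + h3

lemma Emain (f : MvPolynomial (Fin n) k) :
    ((sRefl αv α f) ⊗ₜ[↥(invSub αv α)] (1 : MvPolynomial (Fin n) k)) *
      (lin δ ⊗ₜ[↥(invSub αv α)] 1 - 1 ⊗ₜ[↥(invSub αv α)] lin δ)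
    = (lin δ ⊗ₜ[↥(invSub αv α)] 1 - 1 ⊗ₜ[↥(invSub αv α)] lin δ) *
        ((1 : MvPolynomial (Fin n) k) ⊗ₜ[↥(invSub αv α)] f) := by
  have swapA : ∀ c : MvPolynomial (Fin n) k, c ∈ invSub αv α →
      (c ⊗ₜ[↥(invSub αv α)] (1 : MvPolynomial (Fin n) k))
        = (1 : MvPolynomial (Fin n) k) ⊗ₜ[↥(invSub αv α)] c := by
    intro c hc
    have h := move αv α c 1 1 hc
    rwa [one_mul, mul_one] at h
  have hsf : sRefl αv α f = aPart αv α δ f + dem αv α f * (lin δ - lin α) := by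
    have h1 := dem_spec αv α f
    unfold aPart
    linear_combination - h1
  have hf : f = aPart αv α δ f + dem αv α f * lin δ := aPart_spec αv α δ f
  rw [hsf]
  conv_rhs => rw [hf]
  rw [TensorProduct.add_tmul, TensorProduct.tmul_add]
  rw [show (dem αv α f * (lin δ - lin α)) ⊗ₜ[↥(invSub αv α)] (1 : MvPolynomial (Fin n) k)
      = ((dem αv α f) ⊗ₜ[↥(invSub αv α)] (1 : MvPolynomial (Fin n) k)) *
        ((lin δ - lin α) ⊗ₜ[↥(invSub αv α)] 1) by
    rw [Algebra.TensorProduct.tmul_mul_tmul, mul_one]]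
  rw [show (1 : MvPolynomial (Fin n) k) ⊗ₜ[↥(invSub αv α)] (dem αv α f * lin δ)
      = ((1 : MvPolynomial (Fin n) k) ⊗ₜ[↥(invSub αv α)] (dem αv α f)) *
        (1 ⊗ₜ[↥(invSub αv α)] lin δ) by
    rw [Algebra.TensorProduct.tmul_mul_tmul, mul_one]]
  rw [swapA _ (aPart_mem αv α δ hpair hδ hDS2 f), swapA _ (dem_mem αv α δ hpair hδ hDS2 f)]
  linear_combination ((1 : MvPolynomial (Fin n) k) ⊗ₜ[↥(invSub αv α)] dem αv α f) *
    Edelta αv α δ hpair hδ hDS2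

end Elem

end SESaux

open SESaux in
/-- There is a short exact sequence of `R`-bimodules
`0 → R_s → B_s → R → 0`, where `R_s → B_s` sends `1` to `δ ⊗ 1 − 1 ⊗ δ` and
`B_s → R` is the multiplication map `f ⊗ g ↦ fg`.  Here `R_s` is `R` with the right
action twisted by `s`; so the inclusion `ι` satisfies `ι(f·r) = f·ι(r)` and
`ι(r·s(f)) = ι(r)·f` (twisted right linearity), it is injective, the multiplication
map is surjective, and its kernel is exactly the image of `ι`. -/
theorem ses_Rs_Bs_R {k : Type*} [CommRing k] [IsDomain k] {n : ℕ}
    (αv α : Fin n → k) (hpair : ∑ i, αv i * α i = 2)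
    (δ : Fin n → k) (hδ : ∑ i, αv i * δ i = 1)
    (hDS2 : ∃ v : Fin n → k, ∑ i, α i * v i = 1) :
    ∃ ι : MvPolynomial (Fin n) k →ₗ[k]
        (MvPolynomial (Fin n) k ⊗[↥(invSub αv α)] MvPolynomial (Fin n) k),
      (∀ r : MvPolynomial (Fin n) k,
        ι r = (r ⊗ₜ[↥(invSub αv α)] (1 : MvPolynomial (Fin n) k)) *
          (lin δ ⊗ₜ[↥(invSub αv α)] (1 : MvPolynomial (Fin n) k)
            - (1 : MvPolynomial (Fin n) k) ⊗ₜ[↥(invSub αv α)] lin δ)) ∧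
      (∀ (f r : MvPolynomial (Fin n) k),
        ι (f * r) = (f ⊗ₜ[↥(invSub αv α)] (1 : MvPolynomial (Fin n) k)) * ι r) ∧
      (∀ (f r : MvPolynomial (Fin n) k),
        ι (r * sRefl αv α f) = ι r * ((1 : MvPolynomial (Fin n) k) ⊗ₜ[↥(invSub αv α)] f)) ∧
      Function.Injective ι ∧
      Function.Surjective
        (Algebra.TensorProduct.lmul' (R := ↥(invSub αv α)) (S := MvPolynomial (Fin n) k)) ∧
      (∀ x : MvPolynomial (Fin n) k ⊗[↥(invSub αv α)] MvPolynomial (Fin n) k,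
        Algebra.TensorProduct.lmul' (R := ↥(invSub αv α))
            (S := MvPolynomial (Fin n) k) x = 0 ↔ x ∈ Set.range ι) := by
  classical
  set ι : MvPolynomial (Fin n) k →ₗ[k]
      (MvPolynomial (Fin n) k ⊗[↥(invSub αv α)] MvPolynomial (Fin n) k) :=
    { toFun := fun r => (r * lin δ) ⊗ₜ[↥(invSub αv α)] (1 : MvPolynomial (Fin n) k)
        - r ⊗ₜ[↥(invSub αv α)] lin δ
      map_add' := by
        intro a b
        rw [add_mul, TensorProduct.add_tmul, TensorProduct.add_tmul]
        abel
      map_smul' := by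
        intro c r
        simp only [RingHom.id_apply, smul_mul_assoc, TensorProduct.smul_tmul', smul_sub] }
    with hι
  have hιapp : ∀ r : MvPolynomial (Fin n) k,
      ι r = (r * lin δ) ⊗ₜ[↥(invSub αv α)] (1 : MvPolynomial (Fin n) k)
        - r ⊗ₜ[↥(invSub αv α)] lin δ := fun r => rfl
  have h1 : ∀ r : MvPolynomial (Fin n) k,
      ι r = (r ⊗ₜ[↥(invSub αv α)] (1 : MvPolynomial (Fin n) k)) *
        (lin δ ⊗ₜ[↥(invSub αv α)] (1 : MvPolynomial (Fin n) k)
          - (1 : MvPolynomial (Fin n) k) ⊗ₜ[↥(invSub αv α)] lin δ) := by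
    intro r
    rw [hιapp]
    have r1 : (r ⊗ₜ[↥(invSub αv α)] (1 : MvPolynomial (Fin n) k)) *
        (lin δ ⊗ₜ[↥(invSub αv α)] 1) = (r * lin δ) ⊗ₜ[↥(invSub αv α)] 1 := by
      rw [Algebra.TensorProduct.tmul_mul_tmul, one_mul]
    have r2 : (r ⊗ₜ[↥(invSub αv α)] (1 : MvPolynomial (Fin n) k)) *
        ((1 : MvPolynomial (Fin n) k) ⊗ₜ[↥(invSub αv α)] lin δ)
        = r ⊗ₜ[↥(invSub αv α)] lin δ := by
      rw [Algebra.TensorProduct.tmul_mul_tmul, mul_one, one_mul]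
    linear_combination r2 - r1
  have hinj0 : ∀ c : MvPolynomial (Fin n) k, ι c = 0 → c = 0 := by
    intro c hc
    have h := congrArg (fun z => (Tmap αv α δ hDS2 z).2) hc
    simp only [hιapp, map_sub, map_zero, Tmap_tmul, Prod.snd_sub, Prod.snd_zero] at h
    rw [dem_one αv α hDS2, dem_delta αv α δ hδ hDS2, mul_zero, mul_one, zero_sub,
      neg_eq_zero] at h
    exact h
  have hlmul : ∀ a b : MvPolynomial (Fin n) k,
      Algebra.TensorProduct.lmul' (R := ↥(invSub αv α)) (S := MvPolynomial (Fin n) k)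
        (a ⊗ₜ[↥(invSub αv α)] b) = a * b := fun a b =>
    Algebra.TensorProduct.lmul'_apply_tmul a b
  refine ⟨ι, h1, ?_, ?_, ?_, ?_, ?_⟩
  · intro f r
    rw [hιapp, hιapp, mul_assoc]
    have s1 : (f ⊗ₜ[↥(invSub αv α)] (1 : MvPolynomial (Fin n) k)) *
        ((r * lin δ) ⊗ₜ[↥(invSub αv α)] 1)
        = (f * (r * lin δ)) ⊗ₜ[↥(invSub αv α)] (1 : MvPolynomial (Fin n) k) := by
      rw [Algebra.TensorProduct.tmul_mul_tmul, one_mul]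
    have s2 : (f ⊗ₜ[↥(invSub αv α)] (1 : MvPolynomial (Fin n) k)) *
        (r ⊗ₜ[↥(invSub αv α)] lin δ) = (f * r) ⊗ₜ[↥(invSub αv α)] lin δ := by
      rw [Algebra.TensorProduct.tmul_mul_tmul, one_mul]
    linear_combination s2 - s1
  · intro f r
    rw [h1, h1]
    have t1 : (r ⊗ₜ[↥(invSub αv α)] (1 : MvPolynomial (Fin n) k)) *
        ((sRefl αv α f) ⊗ₜ[↥(invSub αv α)] 1)
        = (r * sRefl αv α f) ⊗ₜ[↥(invSub αv α)] (1 : MvPolynomial (Fin n) k) := by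
      rw [Algebra.TensorProduct.tmul_mul_tmul, one_mul]
    linear_combination (r ⊗ₜ[↥(invSub αv α)] (1 : MvPolynomial (Fin n) k)) *
        Emain αv α δ hpair hδ hDS2 f -
      t1 * (lin δ ⊗ₜ[↥(invSub αv α)] (1 : MvPolynomial (Fin n) k)
        - (1 : MvPolynomial (Fin n) k) ⊗ₜ[↥(invSub αv α)] lin δ)
  · intro a b hab
    have : ι (a - b) = 0 := by rw [map_sub, hab, sub_self]
    have := hinj0 _ this
    exact sub_eq_zero.mp this
  · intro f
    exact ⟨f ⊗ₜ[↥(invSub αv α)] 1, by rw [hlmul, mul_one]⟩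
  · intro x
    constructor
    · intro hx
      refine ⟨-(Tmap αv α δ hDS2 x).2, ?_⟩
      have hco := coords αv α δ hpair hδ hDS2 x
      have hm := congrArg
        (Algebra.TensorProduct.lmul' (R := ↥(invSub αv α)) (S := MvPolynomial (Fin n) k)) hco
      rw [hx, map_add, hlmul, hlmul, mul_one] at hm
      have ha : (Tmap αv α δ hDS2 x).1 = -((Tmap αv α δ hDS2 x).2 * lin δ) := by
        linear_combination -hm
      rw [hιapp]
      conv_rhs => rw [hco, ha]
      rw [neg_mul, TensorProduct.neg_tmul, TensorProduct.neg_tmul]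
      abel
    · rintro ⟨r, rfl⟩
      rw [hιapp, map_sub, hlmul, hlmul, mul_one, sub_self]
end
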